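/- Let (X, φ) be a permutation rack, and let x, y ∈ X. Then d((x−y)·w) = −(x−y)·d(w) for all chains w in CR_•(X,φ). Consequently, for any element v in the kernel of the augmentation ℤX → ℤ, left multiplication by v is a chain map CR_•(X,φ)[1] → CR_•(X,φ), where the suspension has negated differential. -/

import Mathlib

/-!
For any rack, `d (x·w) = w - x ▷ w - x·d w`. In a permutation rack `x ▷ w = φ w` does not depend
on `x`, so the term `w - φ w` enters `d (v·w)` with coefficient the augmentation of `v` and
vanishes when that augmentation is zero, e.g. for `v = x - y`.
-/

/-- Rack chains: free abelian group on `n`-tuples. -/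
abbrev CR (X : Type) (n : ℕ) : Type := (Fin n → X) →₀ ℤ

/-- The monomial basis element. -/
noncomputable def mon {X : Type} {n : ℕ} (w : Fin n → X) : CR X n := Finsupp.single w 1

/-- Delete the `(i+1)`-st entry (1-indexed `k = i+1`). -/
def del {X : Type} {n : ℕ} (w : Fin (n+1) → X) (i : Fin n) : Fin n → X :=
  fun j => if (j : ℕ) < (i : ℕ) then w j.castSucc else w j.succ

/-- Delete the `(i+1)`-st entry and act with it on all later entries. -/
def act {X : Type} (op : X → X → X) {n : ℕ} (w : Fin (n+1) → X) (i : Fin n) : Fin n → X :=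
  fun j => if (j : ℕ) < (i : ℕ) then w j.castSucc else op (w i.castSucc) (w j.succ)

/-- Rack differential on a monomial. -/
noncomputable def dMon {X : Type} (op : X → X → X) {n : ℕ} (w : Fin (n+1) → X) : CR X n :=
  ∑ i : Fin n, ((-1 : ℤ) ^ (i : ℕ)) • (mon (del w i) - mon (act op w i))

/-- The rack differential `CR_{n+1} → CR_n`. -/
noncomputable def d {X : Type} (op : X → X → X) (n : ℕ) : CR X (n+1) →+ CR X n :=
  Finsupp.liftAddHom fun w => zmultiplesHom _ (dMon op w)

/-- Left concatenation `w ↦ x·w`. -/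
noncomputable def consHom {X : Type} (x : X) (n : ℕ) : CR X n →+ CR X (n+1) :=
  Finsupp.liftAddHom fun w => zmultiplesHom _ (mon (Fin.cons x w))

/-- Diagonal action of a map `φ` on chains. -/
noncomputable def mapChains {X : Type} (φ : X → X) (n : ℕ) : CR X n →+ CR X n :=
  Finsupp.liftAddHom fun w => zmultiplesHom _ (mon (φ ∘ w))

/-- Cycles. -/
noncomputable def ZC {X : Type} (op : X → X → X) : (n : ℕ) → AddSubgroup (CR X n)
  | 0 => ⊤
  | (m+1) => (d op m).ker

/-- Boundaries. -/
noncomputable def BC {X : Type} (op : X → X → X) (n : ℕ) : AddSubgroup (CR X n) :=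
  (d op n).range

/-- Rack homology. -/
abbrev HR (X : Type) (op : X → X → X) (n : ℕ) : Type :=
  ZC op n ⧸ ((BC op n).addSubgroupOf (ZC op n))

/-- The rack operation of a permutation rack. -/
def permOp {X : Type} (φ : X ≃ X) : X → X → X := fun _ y => φ y

/-- Multiplication by an element of `ℤX`. -/
noncomputable def mulChain {X : Type} (v : X →₀ ℤ) (n : ℕ) : CR X n →+ CR X (n+1) :=
  ∑ x ∈ v.support, v x • consHom x n

@[simp] lemma d_mon {X : Type} (op : X → X → X) {n : ℕ} (w : Fin (n+1) → X) :
    d op n (mon w) = dMon op w := by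
  simp [d, mon]

@[simp] lemma consHom_mon {X : Type} (x : X) {n : ℕ} (w : Fin n → X) :
    consHom x n (mon w) = mon (Fin.cons x w) := by
  simp [consHom, mon]

@[simp] lemma mapChains_mon {X : Type} (φ : X → X) {n : ℕ} (w : Fin n → X) :
    mapChains φ n (mon w) = mon (φ ∘ w) := by
  simp [mapChains, mon]

section Cons

variable {X : Type} {n : ℕ} (op : X → X → X) (x : X) (w : Fin (n+1) → X)

lemma del_cons_zero : del (Fin.cons x w) 0 = w := by
  funext j; simp [del]

lemma del_cons_succ (i : Fin n) : del (Fin.cons x w) i.succ = Fin.cons x (del w i) := by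
  funext j
  cases j using Fin.cases with
  | zero => simp [del]
  | succ j =>
    simp only [del, Fin.val_succ, Nat.succ_lt_succ_iff, Fin.cons_succ, ← Fin.succ_castSucc]

lemma act_cons_zero : act op (Fin.cons x w) 0 = op x ∘ w := by
  funext j; simp [act]

lemma act_cons_succ (i : Fin n) :
    act op (Fin.cons x w) i.succ = Fin.cons x (act op w i) := by
  funext j
  cases j using Fin.cases with
  | zero => simp [act]
  | succ j =>
    simp only [act, Fin.val_succ, Nat.succ_lt_succ_iff, Fin.cons_succ, ← Fin.succ_castSucc]

lemma dMon_cons :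
    dMon op (Fin.cons x w) = mon w - mon (op x ∘ w) - consHom x n (dMon op w) := by
  have shifted (i : Fin n) : (-1 : ℤ) ^ ((i : ℕ) + 1) •
      (mon (Fin.cons x (del w i)) - mon (Fin.cons x (act op w i))) =
      -consHom x n ((-1 : ℤ) ^ (i : ℕ) • (mon (del w i) - mon (act op w i))) := by
    rw [map_zsmul, map_sub, consHom_mon, consHom_mon, pow_succ]
    module
  rw [dMon, Fin.sum_univ_succ, dMon, map_sum]
  simp only [Fin.val_zero, pow_zero, one_smul, del_cons_zero, act_cons_zero, del_cons_succ,
    act_cons_succ, Fin.val_succ, shifted, Finset.sum_neg_distrib]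
  abel

end Cons

lemma d_comp_consHom {X : Type} (op : X → X → X) (x : X) (n : ℕ) :
    (d op (n+1)).comp (consHom x (n+1)) =
      AddMonoidHom.id _ - mapChains (op x) (n+1) - (consHom x n).comp (d op n) := by
  refine Finsupp.addHom_ext' fun w => AddMonoidHom.ext_int ?_
  change d op (n+1) (consHom x (n+1) (mon w)) =
    mon w - mapChains (op x) (n+1) (mon w) - consHom x n (d op n (mon w))
  simpa using dMon_cons op x w

lemma d_consHom {X : Type} (op : X → X → X) (x : X) (n : ℕ) (w : CR X (n+1)) :
    d op (n+1) (consHom x (n+1) w) = w - mapChains (op x) (n+1) w - consHom x n (d op n w) :=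
  DFunLike.congr_fun (d_comp_consHom op x n) w

lemma mulChain_apply {X : Type} (v : X →₀ ℤ) (n : ℕ) (w : CR X n) :
    mulChain v n w = ∑ z ∈ v.support, v z • consHom z n w := by
  simp [mulChain, AddMonoidHom.finsetSum_apply]

lemma d_mulChain {X : Type} (op : X → X → X) (v : X →₀ ℤ) (n : ℕ) (w : CR X (n+1)) :
    d op (n+1) (mulChain v (n+1) w) =
      ∑ z ∈ v.support, v z • (w - mapChains (op z) (n+1) w) - mulChain v n (d op n w) := by
  simp only [mulChain_apply, map_sum, map_zsmul, d_consHom, smul_sub, Finset.sum_sub_distrib]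

/-- `d((x−y)·w) = −(x−y)·d(w)`, and consequently multiplication by any augmentation-zero
element `v ∈ ℤX` is a chain map `CR_•(X,φ)[1] → CR_•(X,φ)`. -/
theorem mul_by_difference_chain_map (X : Type) (φ : X ≃ X) :
    (∀ (n : ℕ) (x y : X) (w : CR X (n+1)),
      d (permOp φ) (n+1) (consHom x (n+1) w - consHom y (n+1) w) =
        -(consHom x n (d (permOp φ) n w) - consHom y n (d (permOp φ) n w))) ∧
    (∀ v : X →₀ ℤ, (v.sum fun _ m => m) = 0 →
      ∀ (n : ℕ) (w : CR X (n+1)),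
        d (permOp φ) (n+1) (mulChain v (n+1) w) = - mulChain v n (d (permOp φ) n w)) := by
  have hop (z : X) : permOp φ z = φ := rfl
  refine ⟨fun n x y w => ?_, fun v hv n w => ?_⟩
  · rw [map_sub, d_consHom, d_consHom, hop, hop]
    abel
  · have haug : ∑ z ∈ v.support, v z = 0 := hv
    rw [d_mulChain]
    simp only [hop, ← Finset.sum_smul, haug, zero_smul, zero_sub]
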